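/- Let h be exponentially distributed with rate η > 0 (channel power gain), and fix constants P, C, r, σ² > 0, a_c > a_t > 0 with a_c + a_t = 1, and threshold γ with 0 < γ < a_c/a_t. Then for any nonnegative random variable I independent of h, P( a_c·P·h·C·r^{−α}/(a_t·P·h·C·r^{−α} + I + σ²) > γ ) = exp(−Ξ₃·r^α)·E[exp(−(η·γ/((a_c − γ·a_t)·P·C))·r^α·I)], where Ξ₃ = η·γ·σ²/((a_c − γ·a_t)·P·C). -/

import Mathlib

/-!
Once `h > 0`, the SINR exceeds `γ` exactly when `h > s (I + σ²)` with
`s = γ r^α / ((a_c - γ a_t) P C)`. Conditioning on `I`, which is independent of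
`h`, the exponential tail turns the probability into `E[exp (-η s (I + σ²))]`, and the factor
`exp (-η s σ²)` is the noise term.
-/

open MeasureTheory Real Set ProbabilityTheory

section Probability

variable {Ω : Type*} [MeasurableSpace Ω] {μ : Measure Ω} {X Y : Ω → ℝ}

theorem measure_lt_eq_lintegral_of_indepFun [IsFiniteMeasure μ] (hX : Measurable X)
    (hY : Measurable Y) (hXY : IndepFun X Y μ) :
    μ {ω | X ω < Y ω} = ∫⁻ ω, μ {ω' | X ω < Y ω'} ∂μ := by
  have hS : MeasurableSet {p : ℝ × ℝ | p.1 < p.2} := measurableSet_lt measurable_fst measurable_snd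
  have hlaw : μ.map (fun ω => (X ω, Y ω)) = (μ.map X).prod (μ.map Y) :=
    (indepFun_iff_map_prod_eq_prod_map_map hX.aemeasurable hY.aemeasurable).mp hXY
  calc μ {ω | X ω < Y ω} = μ.map (fun ω => (X ω, Y ω)) {p | p.1 < p.2} :=
        (Measure.map_apply (hX.prodMk hY) hS).symm
    _ = ∫⁻ x, μ.map Y (Ioi x) ∂μ.map X := by rw [hlaw, Measure.prod_apply hS]; rfl
    _ = ∫⁻ ω, μ {ω' | X ω < Y ω'} ∂μ := by
        have hm : Measurable fun x => μ.map Y (Ioi x) := measurable_measure_prodMk_left hS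
        rw [lintegral_map hm hX]
        simp_rw [Measure.map_apply hY measurableSet_Ioi]; rfl

theorem ae_pos_of_exp_tail [IsProbabilityMeasure μ] (hY : Measurable Y) {η : ℝ}
    (htail : ∀ t : ℝ, 0 ≤ t → μ {ω | t < Y ω} = ENNReal.ofReal (exp (-(η * t)))) :
    ∀ᵐ ω ∂μ, 0 < Y ω := by
  rw [ae_iff_measure_eq (measurableSet_lt measurable_const hY).nullMeasurableSet, htail 0 le_rfl]
  simp

theorem toReal_measure_lt_of_indepFun_exp_tail [IsFiniteMeasure μ] (hX : Measurable X)
    (hY : Measurable Y) (hXY : IndepFun X Y μ) (hX0 : ∀ᵐ ω ∂μ, 0 ≤ X ω) {η : ℝ}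
    (htail : ∀ t : ℝ, 0 ≤ t → μ {ω | t < Y ω} = ENNReal.ofReal (exp (-(η * t)))) :
    (μ {ω | X ω < Y ω}).toReal = ∫ ω, exp (-(η * X ω)) ∂μ := by
  rw [integral_eq_lintegral_of_nonneg_ae (.of_forall fun ω => (exp_pos _).le)
      (by fun_prop), measure_lt_eq_lintegral_of_indepFun hX hY hXY]
  congr 1
  exact lintegral_congr_ae (hX0.mono fun ω hω => htail (X ω) hω)

end Probability

theorem lt_div_add_iff {a b γ x y : ℝ} (hden : 0 < b * x + y) :
    γ < a * x / (b * x + y) ↔ γ * y < (a - γ * b) * x := by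
  rw [lt_div_iff₀ hden]
  constructor <;> intro h <;> linarith

theorem lt_sinr_iff {ac aT γ P C q g I N : ℝ} (hP : 0 < P) (hC : 0 < C) (hq : 0 < q) (hg : 0 < g)
    (hat : 0 < aT) (hI : 0 ≤ I) (hN : 0 ≤ N) (hγ : γ * aT < ac) :
    γ < ac * P * g * C * q⁻¹ / (aT * P * g * C * q⁻¹ + I + N) ↔
      γ * q / ((ac - γ * aT) * P * C) * (I + N) < g := by
  have hD : 0 < (ac - γ * aT) * P * C := by have := sub_pos.mpr hγ; positivity
  rw [show ac * P * g * C * q⁻¹ = ac * (P * g * C * q⁻¹) by ring,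
    show aT * P * g * C * q⁻¹ + I + N = aT * (P * g * C * q⁻¹) + (I + N) by ring,
    lt_div_add_iff (by positivity), div_mul_eq_mul_div, div_lt_iff₀ hD,
    ← mul_lt_mul_iff_of_pos_right hq, mul_right_comm γ,
    show (ac - γ * aT) * (P * g * C * q⁻¹) * q = g * ((ac - γ * aT) * P * C) by field_simp]

theorem connected_user_coverage_general {Ω : Type*} [MeasurableSpace Ω] (μ : Measure Ω)
    [IsProbabilityMeasure μ] (h I : Ω → ℝ) (hh : Measurable h) (hIm : Measurable I)
    (η P C r σ2 ac aT γ α : ℝ)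
    (hP : 0 < P) (hC : 0 < C) (hr : 0 < r) (hσ : 0 < σ2)
    (hat : 0 < aT)
    (hγ : 0 < γ) (hγ2 : γ < ac / aT)
    (hexp : ∀ t : ℝ, 0 ≤ t → μ {ω | t < h ω} = ENNReal.ofReal (Real.exp (-(η * t))))
    (hInn : ∀ ω, 0 ≤ I ω) (hindep : IndepFun h I μ) :
    (μ {ω | ac * P * h ω * C * r ^ (-α) / (aT * P * h ω * C * r ^ (-α) + I ω + σ2) > γ}).toReal =
      Real.exp (-(η * γ * σ2 / ((ac - γ * aT) * P * C)) * r ^ α) *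
        ∫ ω, Real.exp (-(η * γ / ((ac - γ * aT) * P * C)) * r ^ α * I ω) ∂μ := by
  have hq : 0 < r ^ α := rpow_pos_of_pos hr α
  have hγaT : γ * aT < ac := (lt_div_iff₀ hat).mp hγ2
  set s := γ * r ^ α / ((ac - γ * aT) * P * C) with hs_def
  have hs : 0 ≤ s := by have := sub_pos.mpr hγaT; positivity
  have hcoverage : {ω | ac * P * h ω * C * r ^ (-α) / (aT * P * h ω * C * r ^ (-α) + I ω + σ2) > γ}
      =ᵐ[μ] {ω | s * (I ω + σ2) < h ω} := by
    filter_upwards [ae_pos_of_exp_tail hh hexp] with ω hω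
    simp only [rpow_neg hr.le, gt_iff_lt]
    exact propext (lt_sinr_iff hP hC hq hω hat (hInn ω) hσ.le hγaT)
  rw [measure_congr hcoverage, toReal_measure_lt_of_indepFun_exp_tail (X := fun ω => s * (I ω + σ2))
    (by fun_prop) hh (hindep.symm.comp (φ := fun x => s * (x + σ2)) (by fun_prop) measurable_id)
    (.of_forall fun ω => mul_nonneg hs (add_nonneg (hInn ω) hσ.le)) hexp, ← integral_const_mul]
  congr 1 with ω
  rw [← exp_add, hs_def]
  congr 1
  field_simp
  ring

theorem connected_user_coverage {Ω : Type*} [MeasurableSpace Ω] (μ : Measure Ω)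
    [IsProbabilityMeasure μ] (h I : Ω → ℝ) (hh : Measurable h) (hIm : Measurable I)
    (η P C r σ2 ac aT γ α : ℝ)
    (hη : 0 < η) (hP : 0 < P) (hC : 0 < C) (hr : 0 < r) (hσ : 0 < σ2)
    (hat : 0 < aT) (hacat : aT < ac) (hsum : ac + aT = 1)
    (hγ : 0 < γ) (hγ2 : γ < ac / aT)
    (hexp : ∀ t : ℝ, 0 ≤ t → μ {ω | t < h ω} = ENNReal.ofReal (Real.exp (-(η * t))))
    (hInn : ∀ ω, 0 ≤ I ω) (hindep : IndepFun h I μ) :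
    (μ {ω | ac * P * h ω * C * r ^ (-α) / (aT * P * h ω * C * r ^ (-α) + I ω + σ2) > γ}).toReal =
      Real.exp (-(η * γ * σ2 / ((ac - γ * aT) * P * C)) * r ^ α) *
        ∫ ω, Real.exp (-(η * γ / ((ac - γ * aT) * P * C)) * r ^ α * I ω) ∂μ :=
  connected_user_coverage_general μ h I hh hIm η P C r σ2 ac aT γ α hP hC hr hσ hat hγ hγ2 hexp hInn
    hindep
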